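/- arXiv:2505.20766 — 2 statements merged into one kernel-verified Lean document; each statement's English description precedes it below -/
import Mathlib

section
/- Let δ > 0, u₁ < 0 and Ω₀ > 0. Let r, Ω, p : [0,δ] → ℝ be continuous and h : [0,δ] → ℝ be C¹, and suppose: (1/2)|u₁| ≤ r(v) ≤ 2|u₁| and 0 < Ω(v) ≤ 2Ω₀ for all v ∈ [0,δ]; h(0) ≤ 1; h′(v) ≤ −r(v) Ω(v)⁻² p(v)² for all v ∈ [0,δ]; and ∫₀^δ r(v)² p(v)² dv ≥ 16 Ω₀² |u₁|. Then h(δ) ≤ −1 < 0. -/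
/-!
Along the cone, `r Ω² ≤ 8 Ω₀² |u₁|`, so the Raychaudhuri inequality gives
`h' ≤ -r² p² / (8 Ω₀² |u₁|)`. Integrating, the flux bound makes `h` drop by at least `2`
between `v = 0` and `v = δ`, and `h(0) ≤ 1` leaves `h(δ) ≤ -1`.
-/

open Set intervalIntegral

lemma mul_sq_le_of_le {r w a b : ℝ} (hr : 0 ≤ r) (hra : r ≤ 2 * a) (hw : 0 ≤ w) (hwb : w ≤ 2 * b) :
    r * w ^ 2 ≤ 8 * b ^ 2 * a :=
  calc r * w ^ 2 ≤ (2 * a) * (2 * b) ^ 2 :=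
        mul_le_mul hra (pow_le_pow_left₀ hw hwb 2) (by positivity) (by linarith)
    _ = 8 * b ^ 2 * a := by ring

lemma neg_div_sq_mul_sq_le {r w p K : ℝ} (hr : 0 ≤ r) (hw : 0 < w) (hK : 0 < K)
    (hrw : r * w ^ 2 ≤ K) : -r / w ^ 2 * p ^ 2 ≤ -(r ^ 2 * p ^ 2) / K := by
  have hcoeff : r ^ 2 / K ≤ r / w ^ 2 := by
    rw [div_le_div_iff₀ hK (by positivity)]
    nlinarith [mul_le_mul_of_nonneg_left hrw hr]
  calc -r / w ^ 2 * p ^ 2 = -(r / w ^ 2 * p ^ 2) := by ring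
    _ ≤ -(r ^ 2 / K * p ^ 2) := neg_le_neg (mul_le_mul_of_nonneg_right hcoeff (sq_nonneg p))
    _ = -(r ^ 2 * p ^ 2) / K := by ring

theorem trapping_mechanism_general (δ u₁ Ω₀ : ℝ) (hδ : 0 < δ) (hu₁ : u₁ < 0) (hΩ₀ : 0 < Ω₀)
    (r Ω p h : ℝ → ℝ)
    (hrc : ContinuousOn r (Set.Icc 0 δ))
    (hpc : ContinuousOn p (Set.Icc 0 δ))
    (hr : ∀ v ∈ Set.Icc (0 : ℝ) δ, |u₁| / 2 ≤ r v ∧ r v ≤ 2 * |u₁|)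
    (hΩ : ∀ v ∈ Set.Icc (0 : ℝ) δ, 0 < Ω v ∧ Ω v ≤ 2 * Ω₀)
    (hh0 : h 0 ≤ 1)
    (hdiff : ∀ v ∈ Set.Icc (0 : ℝ) δ, DifferentiableAt ℝ h v)
    (hineq : ∀ v ∈ Set.Icc (0 : ℝ) δ, deriv h v ≤ -(r v) / (Ω v) ^ 2 * (p v) ^ 2)
    (hflux : 16 * Ω₀ ^ 2 * |u₁| ≤ ∫ v in (0 : ℝ)..δ, (r v) ^ 2 * (p v) ^ 2) :
    h δ ≤ -1 ∧ h δ < 0 := by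
  have hu : 0 < |u₁| := abs_pos.mpr hu₁.ne
  set K := 8 * Ω₀ ^ 2 * |u₁|
  have hK : 0 < K := by positivity
  have hderiv (v : ℝ) (hv : v ∈ Icc 0 δ) : deriv h v ≤ -(r v ^ 2 * p v ^ 2) / K := by
    obtain ⟨hr₁, hr₂⟩ := hr v hv
    obtain ⟨hΩ₁, hΩ₂⟩ := hΩ v hv
    have hr₀ : 0 ≤ r v := by linarith
    exact (hineq v hv).trans <|
      neg_div_sq_mul_sq_le hr₀ hΩ₁ hK (mul_sq_le_of_le hr₀ hr₂ hΩ₁.le hΩ₂)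
  have hdrop : h δ - h 0 ≤ ∫ v in (0 : ℝ)..δ, -(r v ^ 2 * p v ^ 2) / K :=
    sub_le_integral_of_hasDeriv_right_of_le hδ.le
      (fun v hv => (hdiff v hv).continuousAt.continuousWithinAt)
      (fun v hv => (hdiff v (Ioo_subset_Icc_self hv)).hasDerivAt.hasDerivWithinAt)
      (ContinuousOn.integrableOn_Icc (by fun_prop))
      (fun v hv => hderiv v (Ioo_subset_Icc_self hv))
  have htwo : ∫ v in (0 : ℝ)..δ, -(r v ^ 2 * p v ^ 2) / K ≤ -2 := by
    rw [integral_div, integral_neg, div_le_iff₀ hK]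
    linarith
  constructor <;> linarith

/-- **The trapping mechanism along an outgoing cone**: with `r` comparable to `|u₁|`,
`0 < Ω ≤ 2Ω₀`, the normalized outgoing expansion `h` satisfying `h(0) ≤ 1`
(nonnegativity of the initial Hawking mass) and the Raychaudhuri inequality
`h′ ≤ −rΩ⁻²p²`, the scalar-field flux lower bound `∫₀^δ r²p² ≥ 16Ω₀²|u₁|` forces
`h(δ) ≤ −1 < 0`, i.e. the final sphere is trapped in the outgoing direction. -/
theorem trapping_mechanism (δ u₁ Ω₀ : ℝ) (hδ : 0 < δ) (hu₁ : u₁ < 0) (hΩ₀ : 0 < Ω₀)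
    (r Ω p h : ℝ → ℝ)
    (hrc : ContinuousOn r (Set.Icc 0 δ))
    (hΩc : ContinuousOn Ω (Set.Icc 0 δ))
    (hpc : ContinuousOn p (Set.Icc 0 δ))
    (hr : ∀ v ∈ Set.Icc (0 : ℝ) δ, |u₁| / 2 ≤ r v ∧ r v ≤ 2 * |u₁|)
    (hΩ : ∀ v ∈ Set.Icc (0 : ℝ) δ, 0 < Ω v ∧ Ω v ≤ 2 * Ω₀)
    (hh0 : h 0 ≤ 1)
    (hC1 : ContDiffOn ℝ 1 h (Set.Icc 0 δ))
    (hdiff : ∀ v ∈ Set.Icc (0 : ℝ) δ, DifferentiableAt ℝ h v)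
    (hineq : ∀ v ∈ Set.Icc (0 : ℝ) δ, deriv h v ≤ -(r v) / (Ω v) ^ 2 * (p v) ^ 2)
    (hflux : 16 * Ω₀ ^ 2 * |u₁| ≤ ∫ v in (0 : ℝ)..δ, (r v) ^ 2 * (p v) ^ 2) :
    h δ ≤ -1 ∧ h δ < 0 :=
  trapping_mechanism_general δ u₁ Ω₀ hδ hu₁ hΩ₀ r Ω p h hrc hpc hr hΩ hh0 hdiff hineq hflux
end

section
/- Let α > 0, 0 < δ ≤ 1 and 0 < t ≤ 1/√8. Let δ′ ∈ (0,δ) satisfy ∫_{δ′}^{δ} x^{2α} dx = (1/2) ∫₀^{δ} x^{2α} dx. Let ψ, g : [0,δ] → ℝ be continuous with ψ(x) ≥ 0 for all x ∈ [0,δ], ψ(x) ≥ t x^α for all x ∈ [δ′,δ], and |g(x) − ψ(x)| ≤ t² x^α for all x ∈ [0,δ]. Then ∫₀^{δ} g(x)² dx ≥ (t²/8) ∫₀^{δ} x^{2α} dx. -/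
/-!
On `[δ', δ]` the perturbation costs at most a factor `1 - t ≥ 1/2`: `g ≥ ψ - t² x^α ≥ t(1 - t) x^α
≥ (t/2) x^α`, so `g² ≥ (t²/4) x^{2α}` there. Integrating over `[δ', δ]`, which carries half of
`∫₀^δ x^{2α}`, and discarding the nonnegative contribution of `[0, δ']` gives the bound `t²/8`.
-/

open intervalIntegral Set

lemma le_half_of_le_one_div_sqrt_eight {t : ℝ} (ht : t ≤ 1 / Real.sqrt 8) : t ≤ 1 / 2 := by
  refine ht.trans (one_div_le_one_div_of_le (by norm_num) ?_)
  rw [Real.le_sqrt (by norm_num) (by norm_num)]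
  norm_num

lemma half_mul_le_of_abs_sub_le_sq_mul {t w p q : ℝ} (ht0 : 0 ≤ t) (ht : t ≤ 1 / 2)
    (hw : 0 ≤ w) (hp : t * w ≤ p) (hq : |q - p| ≤ t ^ 2 * w) : t / 2 * w ≤ q := by
  have hpq := (abs_le.mp hq).1
  nlinarith [mul_nonneg (mul_nonneg ht0 (sub_nonneg.mpr ht)) hw]

lemma sq_mul_rpow_two_mul_le_sq {c x α y : ℝ} (hc : 0 ≤ c) (hx : 0 ≤ x)
    (h : c * x ^ α ≤ y) : c ^ 2 * x ^ (2 * α) ≤ y ^ 2 := by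
  rw [mul_comm 2 α, Real.rpow_mul hx, Real.rpow_two, ← mul_pow]
  exact pow_le_pow_left₀ (by positivity) h 2

theorem genericity_of_flux_lower_bound_general (α δ t δ' : ℝ)
    (ht0 : 0 < t) (ht : t ≤ 1 / Real.sqrt 8)
    (hδ'0 : 0 < δ') (hδ'δ : δ' < δ)
    (hhalf : ∫ x in δ'..δ, x ^ (2 * α) = 1 / 2 * ∫ x in (0 : ℝ)..δ, x ^ (2 * α))
    (ψ g : ℝ → ℝ)
    (hgc : ContinuousOn g (Set.Icc 0 δ))
    (hψlb : ∀ x ∈ Set.Icc δ' δ, t * x ^ α ≤ ψ x)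
    (hclose : ∀ x ∈ Set.Icc (0 : ℝ) δ, |g x - ψ x| ≤ t ^ 2 * x ^ α) :
    t ^ 2 / 8 * ∫ x in (0 : ℝ)..δ, x ^ (2 * α) ≤ ∫ x in (0 : ℝ)..δ, (g x) ^ 2 := by
  have hsub : Icc δ' δ ⊆ Icc 0 δ := Icc_subset_Icc hδ'0.le le_rfl
  have hg_sq : ∀ x ∈ Icc δ' δ, (t / 2) ^ 2 * x ^ (2 * α) ≤ g x ^ 2 := fun x hx => by
    have hx0 : 0 ≤ x := hδ'0.le.trans hx.1
    exact sq_mul_rpow_two_mul_le_sq (by positivity) hx0 <|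
      half_mul_le_of_abs_sub_le_sq_mul ht0.le (le_half_of_le_one_div_sqrt_eight ht)
        (Real.rpow_nonneg hx0 α) (hψlb x hx) (hclose x (hsub hx))
  have hg_int : IntervalIntegrable (fun x => g x ^ 2) MeasureTheory.volume 0 δ :=
    (hgc.pow 2).intervalIntegrable_of_Icc (hδ'0.trans hδ'δ).le
  have hg_int_tail : IntervalIntegrable (fun x => g x ^ 2) MeasureTheory.volume δ' δ :=
    ((hgc.mono hsub).pow 2).intervalIntegrable_of_Icc hδ'δ.le
  have hrpow_int : IntervalIntegrable (fun x : ℝ => x ^ (2 * α)) MeasureTheory.volume δ' δ :=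
    intervalIntegrable_rpow (Or.inr (notMem_uIcc_of_lt hδ'0 (hδ'0.trans hδ'δ)))
  calc t ^ 2 / 8 * ∫ x in (0 : ℝ)..δ, x ^ (2 * α)
      = ∫ x in δ'..δ, (t / 2) ^ 2 * x ^ (2 * α) := by rw [integral_const_mul, hhalf]; ring
    _ ≤ ∫ x in δ'..δ, g x ^ 2 :=
        integral_mono_on hδ'δ.le (hrpow_int.const_mul _) hg_int_tail hg_sq
    _ ≤ ∫ x in (0 : ℝ)..δ, g x ^ 2 :=
        integral_mono_interval hδ'0.le hδ'δ.le le_rfl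
          (Filter.Eventually.of_forall fun x => sq_nonneg (g x)) hg_int

/-- **Genericity of the trapping data**: if `ψ ≥ 0` on `[0,δ]` satisfies `ψ(x) ≥ t x^α`
on `[δ′,δ]`, where `δ′` splits the integral `∫₀^δ x^{2α}` in half, and `g` is within
pointwise weighted distance `|g − ψ| ≤ t² x^α` of `ψ`, then the flux of `g` still
satisfies the lower bound `∫₀^δ g² ≥ (t²/8) ∫₀^δ x^{2α}`. -/
theorem genericity_of_flux_lower_bound (α δ t δ' : ℝ)
    (hα : 0 < α) (hδ0 : 0 < δ) (hδ1 : δ ≤ 1)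
    (ht0 : 0 < t) (ht : t ≤ 1 / Real.sqrt 8)
    (hδ'0 : 0 < δ') (hδ'δ : δ' < δ)
    (hhalf : ∫ x in δ'..δ, x ^ (2 * α) = 1 / 2 * ∫ x in (0 : ℝ)..δ, x ^ (2 * α))
    (ψ g : ℝ → ℝ)
    (hψc : ContinuousOn ψ (Set.Icc 0 δ))
    (hgc : ContinuousOn g (Set.Icc 0 δ))
    (hψ0 : ∀ x ∈ Set.Icc (0 : ℝ) δ, 0 ≤ ψ x)
    (hψlb : ∀ x ∈ Set.Icc δ' δ, t * x ^ α ≤ ψ x)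
    (hclose : ∀ x ∈ Set.Icc (0 : ℝ) δ, |g x - ψ x| ≤ t ^ 2 * x ^ α) :
    t ^ 2 / 8 * ∫ x in (0 : ℝ)..δ, x ^ (2 * α) ≤ ∫ x in (0 : ℝ)..δ, (g x) ^ 2 :=
  genericity_of_flux_lower_bound_general α δ t δ' ht0 ht hδ'0 hδ'δ hhalf ψ g hgc hψlb hclose
end
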